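/- arXiv:2003.05768 — 3 statements merged into one kernel-verified Lean document; each statement's English description precedes it below -/
import Mathlib

section
/- Let F be an abelian field of conductor f and c an odd integer coprime to f. Then the twisted Stickelberger element θ_F^c = (1 - c·σ_c^{-1})·θ_F lies in ℤ[G_F], i.e. has integral coefficients. -/
/-!
Reindexing the sum defining `θ_F` by `a ↦ c a` writes `(1 - c σ_c⁻¹) θ_F` as
`∑_a (c (1/2 - a/f) - (1/2 - {ca/f})) σ_{ca}⁻¹`, and for odd `c` each of these coefficients
is the integer `(c - 1)/2 - ⌊ca/f⌋`.
-/

/-- The normalized Stickelberger element `θ_F = -∑'_{0<a<f} (1/2 - a/f)·σ_a⁻¹` of an abelian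
field `F` with Galois group `G` and conductor `f`, where the Artin symbol `a ↦ σ_a = (F/a)`
is encoded as a homomorphism `σ : (ZMod f)ˣ →* G`. -/
noncomputable def stickelberger (f : ℕ) [NeZero f] {G : Type*} [CommGroup G]
    (σ : (ZMod f)ˣ →* G) : MonoidAlgebra ℚ G :=
  -∑ a : (ZMod f)ˣ,
    MonoidAlgebra.single ((σ a)⁻¹) ((1 : ℚ) / 2 - (((a : ZMod f).val : ℚ)) / (f : ℚ))

/-- `σ` is the Artin map of an abelian field whose conductor is exactly `f`: it is surjective
and does not factor through `(ZMod d)ˣ` for any proper divisor `d` of `f`. -/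
def IsConductor (f : ℕ) [NeZero f] {G : Type*} [CommGroup G] (σ : (ZMod f)ˣ →* G) : Prop :=
  Function.Surjective σ ∧
    ∀ (d : ℕ) (hd : d ∣ f), (∀ a : (ZMod f)ˣ, ZMod.unitsMap hd a = 1 → σ a = 1) → d = f

open MonoidAlgebra

theorem Odd.mul_half_sub_div_sub_half_sub_mod_div {c : ℕ} (hc : Odd c) (v : ℕ) {f : ℕ}
    (hf : f ≠ 0) :
    (c : ℚ) * (1 / 2 - v / f) - (1 / 2 - ((c * v % f : ℕ) : ℚ) / f) =
      (((c / 2 : ℕ) - (c * v / f : ℕ) : ℤ) : ℚ) := by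
  have hdiv : (f : ℚ) * ((c * v / f : ℕ) : ℚ) + ((c * v % f : ℕ) : ℚ) = c * v := by
    exact_mod_cast Nat.div_add_mod (c * v) f
  have hhalf : (2 : ℚ) * ((c / 2 : ℕ) : ℚ) + 1 = c := by
    exact_mod_cast Nat.two_mul_div_two_add_one_of_odd hc
  rw [Int.cast_sub, Int.cast_natCast, Int.cast_natCast]
  field_simp
  linear_combination 2 * hdiv - f * hhalf

theorem ZMod.val_unitOfCoprime_mul {f : ℕ} [NeZero f] {c : ℕ} (hc : c.Coprime f) (b : (ZMod f)ˣ) :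
    ((ZMod.unitOfCoprime c hc * b : (ZMod f)ˣ) : ZMod f).val = c * (b : ZMod f).val % f := by
  rw [Units.val_mul, ZMod.coe_unitOfCoprime, ZMod.val_mul, ZMod.val_natCast, Nat.mod_mul_mod]

theorem MonoidAlgebra.exists_coeff_sum_single_intCast {ι G : Type*} (s : Finset ι) (g : ι → G)
    (n : ι → ℤ) (x : G) :
    ∃ m : ℤ, ((∑ i ∈ s, single (g i) (n i : ℚ) : MonoidAlgebra ℚ G).coeff : G →₀ ℚ) x = m := by
  classical
  refine ⟨∑ i ∈ s, if g i = x then n i else 0, ?_⟩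
  simp [coeff_sum, Finset.sum_apply', Finsupp.single_apply, apply_ite]

section

variable {f : ℕ} [NeZero f] {G : Type*} [CommGroup G] (σ : (ZMod f)ˣ →* G) (u : (ZMod f)ˣ)

theorem stickelberger_eq_sum_mul_left :
    stickelberger f σ = -∑ a : (ZMod f)ˣ,
      single (σ (u * a))⁻¹ ((1 : ℚ) / 2 - ((u * a : (ZMod f)ˣ) : ZMod f).val / f) := by
  rw [stickelberger, ← Equiv.sum_comp (Equiv.mulLeft u)]
  rfl

theorem single_inv_mul_stickelberger :
    single (σ u)⁻¹ 1 * stickelberger f σ = -∑ a : (ZMod f)ˣ,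
      single (σ (u * a))⁻¹ ((1 : ℚ) / 2 - ((a : ZMod f).val : ℚ) / f) := by
  simp only [stickelberger, mul_neg, Finset.mul_sum, single_mul_single, map_mul, mul_inv, one_mul]

theorem one_sub_smul_single_mul_stickelberger {c : ℕ} (hodd : Odd c) (hc : c.Coprime f) :
    ((1 : MonoidAlgebra ℚ G) - (c : ℚ) • single (σ (ZMod.unitOfCoprime c hc))⁻¹ 1) *
        stickelberger f σ =
      ∑ a : (ZMod f)ˣ, single (σ (ZMod.unitOfCoprime c hc * a))⁻¹
        (((c / 2 : ℕ) - (c * (a : ZMod f).val / f : ℕ) : ℤ) : ℚ) := by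
  rw [sub_mul, one_mul, smul_mul_assoc, single_inv_mul_stickelberger,
    stickelberger_eq_sum_mul_left σ (ZMod.unitOfCoprime c hc), smul_neg, Finset.smul_sum,
    neg_sub_neg, ← Finset.sum_sub_distrib]
  refine Finset.sum_congr rfl fun a _ => ?_
  rw [smul_single', ← single_sub, ZMod.val_unitOfCoprime_mul,
    hodd.mul_half_sub_div_sub_half_sub_mod_div _ (NeZero.ne f)]

end

theorem twisted_stickelberger_integral_general (f : ℕ) [NeZero f] {G : Type*} [CommGroup G]
    (σ : (ZMod f)ˣ →* G) (c : ℕ) (hodd : Odd c)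
    (hc : Nat.Coprime c f) :
    ∀ g : G, ∃ n : ℤ,
      ((((1 : MonoidAlgebra ℚ G) -
          (c : ℚ) • MonoidAlgebra.single ((σ (ZMod.unitOfCoprime c hc))⁻¹) 1) *
        stickelberger f σ : MonoidAlgebra ℚ G).coeff : G →₀ ℚ) g = (n : ℚ) := by
  intro g
  rw [one_sub_smul_single_mul_stickelberger σ hodd hc]
  exact exists_coeff_sum_single_intCast _ _ _ g

/-- For `c` odd and coprime to `f`, the twisted Stickelberger element
`θ_F^c = (1 - c·σ_c⁻¹)·θ_F` has integral coefficients, i.e. lies in `ℤ[G_F]`. -/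
theorem twisted_stickelberger_integral (f : ℕ) [NeZero f] (hf : 1 < f) {G : Type*} [CommGroup G]
    (σ : (ZMod f)ˣ →* G) (hcond : IsConductor f σ) (c : ℕ) (hodd : Odd c)
    (hc : Nat.Coprime c f) :
    ∀ g : G, ∃ n : ℤ,
      ((((1 : MonoidAlgebra ℚ G) -
          (c : ℚ) • MonoidAlgebra.single ((σ (ZMod.unitOfCoprime c hc))⁻¹) 1) *
        stickelberger f σ : MonoidAlgebra ℚ G).coeff : G →₀ ℚ) g = (n : ℚ) :=
  twisted_stickelberger_integral_general f σ c hodd hc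
end

section
/- Let F be an abelian field of conductor f_F and K ⊆ F a subfield with K ≠ ℚ of conductor f_K. Then the restriction of the Stickelberger element satisfies N_{F/K}(θ_F) = ∏_{p | f_F, p ∤ f_K} (1 - σ_{K,p}^{-1}) · θ_K, where the product runs over primes p dividing f_F but not f_K and σ_{K,p} is the Frobenius of p in Gal(K/ℚ). -/
/-- The Frobenius (Artin symbol) of a rational prime `p` unramified in the abelian field with
Artin map `σ : (ZMod f)ˣ →* G` (and `1` if `p` divides `f`). -/
noncomputable def frob (f : ℕ) [NeZero f] {G : Type*} [CommGroup G] (σ : (ZMod f)ˣ →* G)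
    (p : ℕ) : G :=
  if h : Nat.Coprime p f then σ (ZMod.unitOfCoprime p h) else 1

/-!
Since `π ∘ σ_F = σ_K ∘ res`, the left side is the Stickelberger element of `σ_K ∘ res`, so only
`σ_K` matters. Both sides then have the form `-∑_b c(b) σ_b⁻¹` over `b ∈ (ℤ/f_K)ˣ`. On the left, `c(b)` is the sum of
`1/2 - a/f_F` over the `0 ≤ a < f_F` prime to `f_F` with `a ≡ b (mod f_K)`; such an `a` is prime to
`f_F` exactly when no prime of `S = {p ∣ f_F, p ∤ f_K}` divides it. Inclusion–exclusion over
`T ⊆ S` turns `c(b)` into an alternating sum over the classes `a ≡ m_T c_T (mod m_T f_K)`, where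
`m_T = ∏_{p ∈ T} p` and `c_T ≡ m_T⁻¹ b (mod f_K)`, and the distribution relation
`∑_{a < dn, a ≡ r (d)} (1/2 - a/(dn)) = 1/2 - r/d` evaluates each of them as `1/2 - c_T/f_K`.
These are the coefficients of `∑_T (-1)^|T| σ_{m_T}⁻¹ θ_K = ∏_{p ∈ S} (1 - σ_p⁻¹) θ_K`.
-/

open Finset MonoidAlgebra

def sawtooth (n a : ℕ) : ℚ := 1 / 2 - a / n

lemma sum_range_filter_modEq {M : Type*} [AddCommMonoid M] {d n r : ℕ} (hr : r < d)
    (f : ℕ → M) :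
    ∑ a ∈ (range (d * n)).filter (· ≡ r [MOD d]), f a = ∑ j ∈ range n, f (r + d * j) := by
  symm
  refine sum_nbij' (fun j => r + d * j) (fun a => a / d) (fun j hj => ?_) (fun a ha => ?_)
    (fun j _ => ?_) (fun a ha => ?_) (fun _ _ => rfl)
  · simp only [mem_filter, mem_range] at hj ⊢
    refine ⟨by nlinarith, ?_⟩
    simp [Nat.ModEq, Nat.add_mul_mod_self_left]
  · simp only [mem_filter, mem_range] at ha ⊢
    exact Nat.div_lt_of_lt_mul ha.1
  · show (r + d * j) / d = j
    rw [Nat.add_mul_div_left _ _ (by omega), Nat.div_eq_of_lt hr, zero_add]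
  · simp only [mem_filter, mem_range, Nat.ModEq, Nat.mod_eq_of_lt hr] at ha
    show r + d * (a / d) = a
    rw [← ha.2, Nat.mod_add_div]

lemma sum_sawtooth_modEq {d n r : ℕ} (hd : 0 < d) (hn : 0 < n) (hr : r < d) :
    ∑ a ∈ (range (d * n)).filter (· ≡ r [MOD d]), sawtooth (d * n) a = sawtooth d r := by
  have gauss : (∑ j ∈ range n, (j : ℚ)) * 2 = n * (n - 1) := by
    rw [← Nat.cast_sum, show (n : ℚ) - 1 = (n - 1 : ℕ) by push_cast [Nat.cast_sub hn]; ring]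
    exact_mod_cast sum_range_id_mul_two n
  rw [sum_range_filter_modEq hr]
  simp only [sawtooth, Nat.cast_add, Nat.cast_mul]
  rw [sum_sub_distrib, sum_const, card_range, ← sum_div, sum_add_distrib, sum_const, card_range,
    ← mul_sum]
  field_simp
  linear_combination -(d : ℚ) * gauss

lemma modEq_and_dvd_iff {m d r c a : ℕ} (hm : m.Coprime d) (hmc : m * c ≡ r [MOD d]) :
    a ≡ r [MOD d] ∧ m ∣ a ↔ a ≡ m * c [MOD m * d] := by
  constructor
  · rintro ⟨har, k, rfl⟩
    exact (Nat.ModEq.cancel_left_of_coprime hm.symm (har.trans hmc.symm)).mul_left' m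
  · intro h
    refine ⟨(h.of_mul_left m).trans hmc, Nat.modEq_zero_iff_dvd.mp ?_⟩
    exact (h.of_mul_right d).trans (Nat.modEq_zero_iff_dvd.mpr (dvd_mul_right m c))

lemma sum_sawtooth_modEq_and_dvd {M d m r c : ℕ} (hM : 0 < M) (hmd : m * d ∣ M)
    (hm : m.Coprime d) (hc : c < d) (hmc : m * c ≡ r [MOD d]) :
    ∑ a ∈ (range M).filter (fun a => a ≡ r [MOD d] ∧ m ∣ a), sawtooth M a = sawtooth d c := by
  obtain ⟨n, rfl⟩ := hmd
  obtain ⟨hmd0, hn0⟩ := CanonicallyOrderedAdd.mul_pos.mp hM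
  have hm0 : 0 < m := Nat.pos_of_mul_pos_right hmd0
  rw [filter_congr fun a _ => modEq_and_dvd_iff hm hmc,
    sum_sawtooth_modEq hmd0 hn0 (Nat.mul_lt_mul_of_pos_left hc hm0)]
  simp only [sawtooth, Nat.cast_mul]
  field_simp

lemma powerset_filter_prod_dvd {P : Finset ℕ} (hP : ∀ p ∈ P, p.Prime) (a : ℕ) :
    P.powerset.filter (fun t => ∏ p ∈ t, p ∣ a) = (P.filter (· ∣ a)).powerset := by
  ext t
  simp only [mem_filter, mem_powerset, subset_iff]
  refine ⟨fun ⟨htP, hta⟩ p hp => ⟨htP hp, (dvd_prod_of_mem _ hp).trans hta⟩,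
    fun ht => ⟨fun p hp => (ht hp).1, prod_primes_dvd a (fun p hp => (hP p (ht hp).1).prime)
      fun p hp => (ht hp).2⟩⟩

lemma sum_filter_forall_not_dvd {R : Type*} [AddCommGroup R] (s P : Finset ℕ)
    (hP : ∀ p ∈ P, p.Prime) (f : ℕ → R) :
    ∑ a ∈ s.filter (fun a => ∀ p ∈ P, ¬ p ∣ a), f a =
      ∑ t ∈ P.powerset, (-1 : ℤ) ^ #t • ∑ a ∈ s.filter (∏ p ∈ t, p ∣ ·), f a := by
  simp_rw [sum_filter, smul_sum]
  rw [sum_comm]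
  refine sum_congr rfl fun a _ => ?_
  simp_rw [smul_ite, smul_zero]
  rw [← sum_filter, ← sum_smul, powerset_filter_prod_dvd hP, sum_powerset_neg_one_pow_card]
  simp only [filter_eq_empty_iff, ite_smul, one_smul, zero_smul]

lemma sum_units_eq_sum_range_coprime {R : Type*} [AddCommMonoid R] {n : ℕ} [NeZero n]
    (P : ℕ → Prop) [DecidablePred P] (g : ℕ → R) :
    ∑ u ∈ univ.filter (fun u : (ZMod n)ˣ => P (u : ZMod n).val), g (u : ZMod n).val =
      ∑ a ∈ (range n).filter (fun a => a.Coprime n ∧ P a), g a := by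
  refine sum_nbij' (fun u => (u : ZMod n).val)
    (fun a => if h : a.Coprime n then ZMod.unitOfCoprime a h else 1)
    (fun u hu => ?_) (fun a ha => ?_) (fun u _ => ?_) (fun a ha => ?_) (fun _ _ => rfl)
  · simp only [mem_filter, mem_univ, true_and, mem_range] at hu ⊢
    exact ⟨ZMod.val_lt _, ZMod.val_coe_unit_coprime u, hu⟩
  · simp only [mem_filter, mem_range] at ha
    simp [dif_pos ha.2.1, ZMod.val_natCast, Nat.mod_eq_of_lt ha.1, ha.2.2]
  · simp [dif_pos (ZMod.val_coe_unit_coprime u), Units.ext_iff]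
  · simp only [mem_filter, mem_range] at ha
    simp [dif_pos ha.2.1, ZMod.val_natCast, Nat.mod_eq_of_lt ha.1]

lemma unitsMap_eq_iff_modEq {m n : ℕ} [NeZero m] [NeZero n] (h : n ∣ m) (u : (ZMod m)ˣ)
    (b : (ZMod n)ˣ) : ZMod.unitsMap h u = b ↔ (u : ZMod m).val ≡ (b : ZMod n).val [MOD n] := by
  rw [Units.ext_iff, ZMod.unitsMap_val, ZMod.cast_eq_val, ← ZMod.natCast_eq_natCast_iff,
    ZMod.natCast_zmod_val]

lemma coprime_iff_forall_not_dvd {m n a r : ℕ} (hm : m ≠ 0) (hr : r.Coprime n)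
    (ha : a ≡ r [MOD n]) :
    a.Coprime m ↔ ∀ p ∈ m.primeFactors.filter (¬ · ∣ n), ¬ p ∣ a := by
  simp only [mem_filter, Nat.mem_primeFactors]
  refine ⟨fun hcop p ⟨⟨hp, hpm, _⟩, _⟩ hpa =>
      hp.one_lt.ne' (Nat.eq_one_of_dvd_coprimes hcop hpa hpm),
    fun hS => Nat.coprime_of_dvd fun p hp hpa hpm => ?_⟩
  by_cases hpn : p ∣ n
  · exact hp.one_lt.ne' (Nat.eq_one_of_dvd_coprimes hr ((ha.dvd_iff hpn).mp hpa) hpn)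
  · exact hS p ⟨⟨hp, hpm, hm⟩, hpn⟩ hpa

lemma coprime_of_mem_primeFactors_filter {m n p : ℕ} (hp : p ∈ m.primeFactors.filter (¬ · ∣ n)) :
    p.Coprime n :=
  (Nat.Prime.coprime_iff_not_dvd (Nat.prime_of_mem_primeFactors (mem_filter.mp hp).1)).mpr
    (mem_filter.mp hp).2

lemma sum_unitsMap_fiber_sawtooth {m n : ℕ} [NeZero m] [NeZero n] (h : n ∣ m) (b : (ZMod n)ˣ) :
    ∑ u ∈ univ.filter (ZMod.unitsMap h · = b), sawtooth m (u : ZMod m).val =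
      ∑ t ∈ (m.primeFactors.filter (¬ · ∣ n)).powerset,
        (-1) ^ #t * sawtooth n ((((∏ p ∈ t, p : ℕ) : ZMod n))⁻¹ * b).val := by
  set r := (b : ZMod n).val
  set S := m.primeFactors.filter (¬ · ∣ n)
  have hprime : ∀ p ∈ S, p.Prime := fun p hp => Nat.prime_of_mem_primeFactors (mem_filter.mp hp).1
  have hunit : ∀ a ∈ range m, a.Coprime m ∧ a ≡ r [MOD n] ↔ a ≡ r [MOD n] ∧ ∀ p ∈ S, ¬ p ∣ a :=
    fun a _ => (and_congr_left fun ha =>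
      coprime_iff_forall_not_dvd (NeZero.ne m) (ZMod.val_coe_unit_coprime b) ha).trans and_comm
  simp_rw [unitsMap_eq_iff_modEq h]
  rw [sum_units_eq_sum_range_coprime (· ≡ r [MOD n]), filter_congr hunit, ← filter_filter,
    sum_filter_forall_not_dvd _ _ hprime]
  refine sum_congr rfl fun t ht => ?_
  rw [zsmul_eq_mul, Int.cast_pow, Int.cast_neg, Int.cast_one, filter_filter]
  have htS := mem_powerset.mp ht
  have hcop : (∏ p ∈ t, p).Coprime n :=
    Nat.Coprime.prod_left fun p hp => coprime_of_mem_primeFactors_filter (htS hp)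
  have hdvd : ∏ p ∈ t, p ∣ m := prod_primes_dvd m (fun p hp => (hprime p (htS hp)).prime)
    fun p hp => Nat.dvd_of_mem_primeFactors (mem_filter.mp (htS hp)).1
  congr 1
  refine sum_sawtooth_modEq_and_dvd (Nat.pos_of_ne_zero (NeZero.ne m))
    (hcop.mul_dvd_of_dvd_of_dvd hdvd h) hcop (ZMod.val_lt _) ?_
  rw [← ZMod.natCast_eq_natCast_iff, Nat.cast_mul, ZMod.natCast_zmod_val, ZMod.natCast_zmod_val,
    ← mul_assoc, ZMod.coe_mul_inv_eq_one _ hcop, one_mul]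

lemma single_finset_sum {ι k M : Type*} [Semiring k] (s : Finset ι) (m : M) (r : ι → k) :
    single m (∑ i ∈ s, r i) = ∑ i ∈ s, single m (r i) :=
  map_sum (singleAddHom m) r s

lemma prod_one_sub_single {ι k M : Type*} [CommRing k] [CommMonoid M] [DecidableEq ι]
    (s : Finset ι) (g : ι → M) :
    ∏ i ∈ s, (1 - single (g i) (1 : k)) = ∑ t ∈ s.powerset, single (∏ i ∈ t, g i) ((-1) ^ #t) := by
  simp_rw [sub_eq_neg_add, ← single_neg, prod_add, prod_const_one, mul_one, prod_single,
    prod_const]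

section GroupAlgebra

variable {G H : Type*} [CommGroup G] [CommGroup H]

lemma mapDomainRingHom_stickelberger (f : ℕ) [NeZero f] (σ : (ZMod f)ˣ →* G) (φ : G →* H) :
    mapDomainRingHom ℚ φ (stickelberger f σ) = stickelberger f (φ.comp σ) := by
  simp only [stickelberger, map_neg, map_sum, mapDomainRingHom_apply, mapDomain_single, map_inv,
    MonoidHom.comp_apply]

lemma stickelberger_comp_eq_sum_fiber (f : ℕ) [NeZero f] [Fintype H] [DecidableEq H]
    (ψ : (ZMod f)ˣ →* H) (σ : H →* G) :
    stickelberger f (σ.comp ψ) =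
      -∑ h, single (σ h)⁻¹ (∑ a ∈ univ.filter (ψ · = h), sawtooth f (a : ZMod f).val) := by
  rw [stickelberger, ← sum_fiberwise univ ψ]
  congr 1
  refine sum_congr rfl fun h _ => ?_
  rw [single_finset_sum]
  refine sum_congr rfl fun a ha => ?_
  rw [MonoidHom.comp_apply, (mem_filter.mp ha).2]
  rfl

lemma frob_one (f : ℕ) [NeZero f] (σ : (ZMod f)ˣ →* G) : frob f σ 1 = 1 := by
  rw [frob, dif_pos (Nat.coprime_one_left f), ← map_one σ]
  congr 1
  ext
  simp

lemma frob_mul {f m n : ℕ} [NeZero f] (σ : (ZMod f)ˣ →* G) (hm : m.Coprime f)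
    (hn : n.Coprime f) : frob f σ (m * n) = frob f σ m * frob f σ n := by
  rw [frob, frob, frob, dif_pos hm, dif_pos hn, dif_pos (hm.mul_left hn), ← map_mul]
  congr 1
  ext
  simp

lemma prod_frob {f : ℕ} [NeZero f] (σ : (ZMod f)ˣ →* G) {t : Finset ℕ}
    (ht : ∀ p ∈ t, p.Coprime f) :
    ∏ p ∈ t, frob f σ p = frob f σ (∏ p ∈ t, p) := by
  induction t using Finset.induction_on with
  | empty => rw [prod_empty, prod_empty, frob_one]
  | insert p t hp ih =>
    rw [prod_insert hp, prod_insert hp, ih fun q hq => ht q (mem_insert_of_mem hq),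
      frob_mul σ (ht p (mem_insert_self p t)) (Nat.Coprime.prod_left fun q hq =>
        ht q (mem_insert_of_mem hq))]

lemma single_frob_inv_mul_stickelberger {f m : ℕ} [NeZero f] (σ : (ZMod f)ˣ →* G)
    (hm : m.Coprime f) (r : ℚ) :
    single (frob f σ m)⁻¹ r * stickelberger f σ =
      -∑ b, single (σ b)⁻¹ (r * sawtooth f (((m : ZMod f))⁻¹ * b).val) := by
  rw [stickelberger, mul_neg, mul_sum, frob, dif_pos hm]
  congr 1
  refine Fintype.sum_equiv (Equiv.mulLeft (ZMod.unitOfCoprime m hm)) _ _ fun a => ?_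
  rw [single_mul_single, Equiv.coe_mulLeft, ← mul_inv, ← map_mul, Units.val_mul,
    ZMod.coe_unitOfCoprime, ← mul_assoc,
    ZMod.inv_mul_of_unit _ ((ZMod.isUnit_iff_coprime m f).mpr hm), one_mul]
  rfl

theorem stickelberger_comp_unitsMap {m n : ℕ} [NeZero m] [NeZero n] (h : n ∣ m)
    (σ : (ZMod n)ˣ →* G) :
    stickelberger m (σ.comp (ZMod.unitsMap h)) =
      (∏ p ∈ m.primeFactors.filter (¬ · ∣ n), (1 - single (frob n σ p)⁻¹ (1 : ℚ))) *
        stickelberger n σ := by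
  rw [stickelberger_comp_eq_sum_fiber, prod_one_sub_single, sum_mul]
  simp_rw [sum_unitsMap_fiber_sawtooth, single_finset_sum]
  rw [sum_comm, ← sum_neg_distrib]
  refine sum_congr rfl fun t ht => ?_
  have htcop p (hp : p ∈ t) : p.Coprime n :=
    coprime_of_mem_primeFactors_filter (mem_powerset.mp ht hp)
  rw [prod_inv_distrib, prod_frob σ htcop,
    single_frob_inv_mul_stickelberger σ (Nat.Coprime.prod_left htcop)]

end GroupAlgebra

theorem stickelberger_restriction_general (fF fK : ℕ) [NeZero fF] [NeZero fK]
    {GF GK : Type*} [CommGroup GF] [CommGroup GK]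
    (σF : (ZMod fF)ˣ →* GF) (σK : (ZMod fK)ˣ →* GK)
    (hdvd : fK ∣ fF) (π : GF →* GK)
    (hcomp : ∀ a : (ZMod fF)ˣ, π (σF a) = σK (ZMod.unitsMap hdvd a)) :
    MonoidAlgebra.mapDomainRingHom ℚ π (stickelberger fF σF) =
      (∏ p ∈ fF.primeFactors.filter fun p => ¬ p ∣ fK,
        ((1 : MonoidAlgebra ℚ GK) - MonoidAlgebra.single (frob fK σK p)⁻¹ 1)) *
        stickelberger fK σK := by
  rw [mapDomainRingHom_stickelberger, show π.comp σF = σK.comp (ZMod.unitsMap hdvd) from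
    MonoidHom.ext hcomp, stickelberger_comp_unitsMap]

/-- Restriction formula for Stickelberger elements: if `K ⊆ F` (`K ≠ ℚ`), then
`N_{F/K}(θ_F) = ∏_{p ∣ f_F, p ∤ f_K} (1 - σ_{K,p}⁻¹) · θ_K`, the norm map `N_{F/K}` being
induced by the restriction `π : Gal(F/ℚ) →* Gal(K/ℚ)` of automorphisms. -/
theorem stickelberger_restriction (fF fK : ℕ) [NeZero fF] [NeZero fK] (hK : 1 < fK)
    {GF GK : Type*} [CommGroup GF] [CommGroup GK]
    (σF : (ZMod fF)ˣ →* GF) (σK : (ZMod fK)ˣ →* GK)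
    (hcondF : IsConductor fF σF) (hcondK : IsConductor fK σK)
    (hdvd : fK ∣ fF) (π : GF →* GK) (hπ : Function.Surjective π)
    (hcomp : ∀ a : (ZMod fF)ˣ, π (σF a) = σK (ZMod.unitsMap hdvd a)) :
    MonoidAlgebra.mapDomainRingHom ℚ π (stickelberger fF σF) =
      (∏ p ∈ fF.primeFactors.filter fun p => ¬ p ∣ fK,
        ((1 : MonoidAlgebra ℚ GK) - MonoidAlgebra.single (frob fK σK p)⁻¹ 1)) *
        stickelberger fK σK :=
  stickelberger_restriction_general fF fK σF σK hdvd π hcomp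
end

section
/- Let F be an abelian field of conductor f_F and K ⊆ F a subfield (K ≠ ℚ) of conductor f_K, such that f_F and f_K have the same prime divisors. Then N_{F/K}(θ_F) = θ_K. -/
/-!
Pushing `θ_F` forward along `π` replaces `σ_F(a)` by `σ_K(a mod f_K)`, so the coefficient of
`σ_K(b)⁻¹` in `N_{F/K}(θ_F)` is the sum of `1/2 - a/f_F` over the units `a` mod `f_F` above `b`.
Since every prime dividing `f_F` divides `f_K`, each lift `b + j f_K` (`0 ≤ j < k := f_F / f_K`)
of a unit `b` is again a unit, and `∑_{j<k} (1/2 - (b + j f_K)/(k f_K)) = 1/2 - b/f_K`.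
-/

open Finset

theorem Nat.Coprime.of_primeFactors_subset {x m n : ℕ} (hn : n ≠ 0)
    (h : n.primeFactors ⊆ m.primeFactors) (hx : x.Coprime m) : x.Coprime n :=
  Nat.coprime_of_dvd fun _ hp hpx hpn =>
    hp.one_lt.ne' <| Nat.eq_one_of_dvd_coprimes hx hpx <|
      Nat.dvd_of_mem_primeFactors <| h <| Nat.mem_primeFactors.2 ⟨hp, hpn, hn⟩

theorem ZMod.val_unitsMap {m n : ℕ} [NeZero n] (hdvd : m ∣ n) (a : (ZMod n)ˣ) :
    (ZMod.unitsMap hdvd a : ZMod m).val = (a : ZMod n).val % m := by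
  rw [ZMod.unitsMap_val, ZMod.cast_eq_val, ZMod.val_natCast]

theorem ZMod.sum_unitsMap_fiber_eq_sum_range {M : Type*} [AddCommMonoid M] {m n : ℕ} [NeZero n]
    (hdvd : m ∣ n) (hprimes : n.primeFactors ⊆ m.primeFactors) (b : (ZMod m)ˣ) (g : ℕ → M) :
    ∑ a with ZMod.unitsMap hdvd a = b, g (a : ZMod n).val =
      ∑ j ∈ range (n / m), g ((b : ZMod m).val + j * m) := by
  have : NeZero m := ⟨fun hm => NeZero.ne n (Nat.eq_zero_of_zero_dvd (hm ▸ hdvd))⟩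
  set B := (b : ZMod m).val
  have hcop (j : ℕ) : (B + j * m).Coprime n := by
    refine Nat.Coprime.of_primeFactors_subset (NeZero.ne n) hprimes ?_
    rw [Nat.coprime_add_mul_right_left]
    exact ZMod.val_coe_unit_coprime b
  have hlift {a : (ZMod n)ˣ} (ha : ZMod.unitsMap hdvd a = b) :
      B + (a : ZMod n).val / m * m = (a : ZMod n).val := by
    have hmod : (a : ZMod n).val % m = B := by rw [← ZMod.val_unitsMap hdvd, ha]
    rw [← hmod, Nat.mod_add_div']
  refine sum_nbij' (fun a => (a : ZMod n).val / m) (fun j => ZMod.unitOfCoprime _ (hcop j))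
    ?_ ?_ ?_ ?_ ?_
  · intro a _
    exact mem_range.2 (Nat.div_lt_div_of_lt_of_dvd hdvd (ZMod.val_lt _))
  · intro j _
    refine mem_filter.2 ⟨mem_univ _, ?_⟩
    ext
    rw [ZMod.unitsMap_val, ZMod.coe_unitOfCoprime, ZMod.cast_natCast hdvd]
    simp [B]
  · intro a ha
    ext
    rw [ZMod.coe_unitOfCoprime, hlift (mem_filter.1 ha).2, ZMod.natCast_zmod_val]
  · intro j hj
    have hB : B < m := ZMod.val_lt _
    have hlt : B + j * m < n := calc
      B + j * m < (j + 1) * m := by linarith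
      _ ≤ n / m * m := Nat.mul_le_mul_right m (mem_range.1 hj)
      _ = n := Nat.div_mul_cancel hdvd
    rw [ZMod.coe_unitOfCoprime, ZMod.val_natCast_of_lt hlt,
      Nat.add_mul_div_right _ _ (NeZero.pos m), Nat.div_eq_of_lt hB, zero_add]
  · intro a ha
    rw [hlift (mem_filter.1 ha).2]

theorem Finset.sum_range_half_sub_div (B m : ℚ) (k : ℕ) (hm : m ≠ 0) (hk : k ≠ 0) :
    ∑ j ∈ range k, ((1 : ℚ) / 2 - (B + j * m) / (m * k)) = 1 / 2 - B / m := by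
  have hgauss : ∑ j ∈ range k, (j : ℚ) = k * (k - 1) / 2 := by
    have := congrArg (Nat.cast : ℕ → ℚ) (Finset.sum_range_id_mul_two k)
    push_cast [Nat.cast_sub (Nat.one_le_iff_ne_zero.2 hk)] at this
    linarith
  have hkQ : (k : ℚ) ≠ 0 := Nat.cast_ne_zero.2 hk
  simp only [sum_sub_distrib, ← sum_div, sum_add_distrib, ← sum_mul, hgauss, sum_const, card_range,
    nsmul_eq_mul]
  field_simp
  ring

theorem ZMod.sum_unitsMap_fiber_half_sub_val_div {m n : ℕ} [NeZero m] [NeZero n] (hdvd : m ∣ n)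
    (hprimes : n.primeFactors ⊆ m.primeFactors) (b : (ZMod m)ˣ) :
    ∑ a with ZMod.unitsMap hdvd a = b, ((1 : ℚ) / 2 - (a : ZMod n).val / n) =
      1 / 2 - (b : ZMod m).val / m := by
  rw [ZMod.sum_unitsMap_fiber_eq_sum_range hdvd hprimes b fun v => (1 : ℚ) / 2 - v / n]
  set k := n / m
  have hn : m * k = n := Nat.mul_div_cancel' hdvd
  have hk : k ≠ 0 := fun h => NeZero.ne n (by rw [← hn, h, mul_zero])
  rw [← Finset.sum_range_half_sub_div _ _ _ (NeZero.ne (m : ℚ)) hk, ← hn, Nat.cast_mul]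
  simp only [Nat.cast_add, Nat.cast_mul]

theorem MonoidAlgebra.sum_single_comp_eq_sum_fiberwise {k G ι κ : Type*} [Semiring k]
    [Fintype ι] [Fintype κ] [DecidableEq κ] (p : ι → κ) (g : κ → G) (c : ι → k) :
    ∑ i, single (g (p i)) (c i) = ∑ j, single (g j) (∑ i with p i = j, c i) := by
  rw [← Finset.sum_fiberwise univ p]
  refine sum_congr rfl fun j _ => ?_
  calc ∑ i with p i = j, single (g (p i)) (c i) = ∑ i with p i = j, single (g j) (c i) :=
        sum_congr rfl fun i hi => by rw [(mem_filter.1 hi).2]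
    _ = single (g j) (∑ i with p i = j, c i) := (map_sum (singleAddHom (g j)) c _).symm

theorem stickelberger_restriction_same_primes_general (fF fK : ℕ) [NeZero fF] [NeZero fK]
    {GF GK : Type*} [CommGroup GF] [CommGroup GK]
    (σF : (ZMod fF)ˣ →* GF) (σK : (ZMod fK)ˣ →* GK)
    (hdvd : fK ∣ fF) (π : GF →* GK)
    (hcomp : ∀ a : (ZMod fF)ˣ, π (σF a) = σK (ZMod.unitsMap hdvd a))
    (hprimes : fF.primeFactors = fK.primeFactors) :
    MonoidAlgebra.mapDomainRingHom ℚ π (stickelberger fF σF) = stickelberger fK σK := by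
  classical
  simp only [stickelberger, map_neg, map_sum, MonoidAlgebra.mapDomainRingHom_apply,
    MonoidAlgebra.mapDomain_single, map_inv, hcomp]
  rw [MonoidAlgebra.sum_single_comp_eq_sum_fiberwise (ZMod.unitsMap hdvd) (fun b => (σK b)⁻¹)]
  simp only [ZMod.sum_unitsMap_fiber_half_sub_val_div hdvd hprimes.subset]

/-- If `f_F` and `f_K` have the same prime divisors, then `N_{F/K}(θ_F) = θ_K`. -/
theorem stickelberger_restriction_same_primes (fF fK : ℕ) [NeZero fF] [NeZero fK] (hK : 1 < fK)
    {GF GK : Type*} [CommGroup GF] [CommGroup GK]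
    (σF : (ZMod fF)ˣ →* GF) (σK : (ZMod fK)ˣ →* GK)
    (hcondF : IsConductor fF σF) (hcondK : IsConductor fK σK)
    (hdvd : fK ∣ fF) (π : GF →* GK) (hπ : Function.Surjective π)
    (hcomp : ∀ a : (ZMod fF)ˣ, π (σF a) = σK (ZMod.unitsMap hdvd a))
    (hprimes : fF.primeFactors = fK.primeFactors) :
    MonoidAlgebra.mapDomainRingHom ℚ π (stickelberger fF σF) = stickelberger fK σK :=
  stickelberger_restriction_same_primes_general fF fK σF σK hdvd π hcomp hprimes
end
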